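/- arXiv:1402.5536 — 2 statements merged into one kernel-verified Lean document; each statement's English description precedes it below -/
import Mathlib

section
/- Solutions of the Hill equation whose coefficients form the quiddity of a Farey n-gon are antiperiodic: let (v_0, …, v_{n−1}) be a Farey n-gon with quiddity (q_0, …, q_{n−1}), extended n-periodically to all integer indices. Then every sequence V : ℤ → ℤ satisfying V_{j+1} = q_{j mod n} · V_j − V_{j−1} for all j ∈ ℤ satisfies V_{j+n} = −V_j for all j ∈ ℤ. -/
/-!
Extend the polygon antiperiodically to `w : ℤ → ℤ²`, `w (j + n) = -w j`. Consecutive vectors of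
`w` have determinant `1`, and for three vectors `a, b, c` with `det(a, b) = det(b, c) = 1` one has
`a + c = det(a, c) • b`; the Farey condition makes `det(w (j - 1), w (j + 1))` positive, so it is
the quiddity `q j`. Hence both coordinates of `w` solve the Hill equation, and as their Wronskian
`det(w 0, w 1)` is `1`, every solution is an integer combination of them, hence antiperiodic.
-/

/-- `fdet (a,b) (c,d) = a*d - b*c`. -/
def fdet (u v : ℤ × ℤ) : ℤ := u.1 * v.2 - u.2 * v.1

/-- A primitive vector `(a,b) ∈ ℤ²`: `gcd(a,b) = 1`, `b ≥ 0`, and `a = 1` whenever `b = 0`. -/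
def IsPrimitive (u : ℤ × ℤ) : Prop := Int.gcd u.1 u.2 = 1 ∧ 0 ≤ u.2 ∧ (u.2 = 0 → u.1 = 1)

/-- A Farey `n`-gon: primitive vectors `v 0, …, v (n-1)` with `det(v i, v j) > 0`
for `i < j < n`, `det(v i, v (i+1)) = 1` for `i + 1 < n`, and `det(v 0, v (n-1)) = 1`. -/
def IsFareyPolygon (n : ℕ) (v : ℕ → ℤ × ℤ) : Prop :=
  (∀ i < n, IsPrimitive (v i)) ∧
  (∀ i j, i < j → j < n → 0 < fdet (v i) (v j)) ∧
  (∀ i, i + 1 < n → fdet (v i) (v (i + 1)) = 1) ∧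
  fdet (v 0) (v (n - 1)) = 1

open Function

section HillEquation

variable {R M N : Type*} [CommRing R] [AddCommGroup M] [Module R M] [AddCommGroup N] [Module R N]

def IsHillSolution (c : ℤ → R) (V : ℤ → M) : Prop :=
  ∀ j, V (j + 1) = c j • V j - V (j - 1)

namespace IsHillSolution

section

variable {c : ℤ → R} {U V : ℤ → M}

theorem map (hV : IsHillSolution c V) (f : M →ₗ[R] N) : IsHillSolution c (f ∘ V) := fun j => by
  simp only [comp_apply, hV j, map_sub, map_smul]

theorem smul_sub_smul (hU : IsHillSolution c U) (hV : IsHillSolution c V) (a b : R) :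
    IsHillSolution c (fun j => a • U j - b • V j) := fun j => by
  dsimp only
  rw [hU j, hV j]
  module

theorem eq_of_eq_zero_of_eq_one (hU : IsHillSolution c U) (hV : IsHillSolution c V)
    (h₀ : U 0 = V 0) (h₁ : U 1 = V 1) : U = V := by
  suffices h : ∀ j, U j = V j ∧ U (j + 1) = V (j + 1) from funext fun j => (h j).1
  intro j
  induction j using Int.induction_on with
  | zero => exact ⟨h₀, by rwa [zero_add]⟩
  | succ j ih => exact ⟨ih.2, by rw [hU, hV, add_sub_cancel_right, ih.1, ih.2]⟩
  | pred j ih =>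
    refine ⟨?_, by rw [sub_add_cancel]; exact ih.1⟩
    have hU' := hU (-j)
    have hV' := hV (-j)
    rw [ih.1, ih.2] at hU'
    rw [hU'] at hV'
    exact sub_right_injective hV'

end

section

variable {c X Y V : ℤ → R}

theorem eq_combination_of_wronskian_eq_one (hX : IsHillSolution c X) (hY : IsHillSolution c Y)
    (hV : IsHillSolution c V) (hW : X 0 * Y 1 - Y 0 * X 1 = 1) :
    V = fun j => (X 0 * V 1 - X 1 * V 0) * Y j - (Y 0 * V 1 - Y 1 * V 0) * X j :=
  hV.eq_of_eq_zero_of_eq_one (hY.smul_sub_smul hX _ _)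
    (by linear_combination -V 0 * hW) (by linear_combination -V 1 * hW)

theorem antiperiodic_of_wronskian_eq_one (hX : IsHillSolution c X) (hY : IsHillSolution c Y)
    (hV : IsHillSolution c V) (hW : X 0 * Y 1 - Y 0 * X 1 = 1) {p : ℤ}
    (hXp : Antiperiodic X p) (hYp : Antiperiodic Y p) : Antiperiodic V p := by
  rw [hX.eq_combination_of_wronskian_eq_one hY hV hW]
  intro j
  simp only [hXp j, hYp j]
  ring

end

end IsHillSolution

end HillEquation

theorem fdet_neg_left (u v : ℤ × ℤ) : fdet (-u) v = -fdet u v := by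
  simp only [fdet, Prod.fst_neg, Prod.snd_neg]; ring

theorem fdet_neg_right (u v : ℤ × ℤ) : fdet u (-v) = -fdet u v := by
  simp only [fdet, Prod.fst_neg, Prod.snd_neg]; ring

theorem fdet_swap (u v : ℤ × ℤ) : fdet v u = -fdet u v := by
  simp only [fdet]; ring

theorem eq_natAbs_fdet_smul_sub {a b c : ℤ × ℤ} (hab : fdet a b = 1) (hbc : fdet b c = 1)
    (hac : 0 ≤ fdet a c) : c = ((fdet a c).natAbs : ℤ) • b - a := by
  rw [Int.natAbs_of_nonneg hac]
  simp only [fdet] at hab hbc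
  ext <;> simp only [fdet, Prod.smul_fst, Prod.smul_snd, Prod.fst_sub, Prod.snd_sub, smul_eq_mul]
  · linear_combination -c.1 * hab - a.1 * hbc
  · linear_combination -c.2 * hab - a.2 * hbc

section AntiperiodicExtension

variable {α : Type*} [AddGroup α] (v : ℕ → α)

/-- The sequence `v 0, …, v (n - 1), -v 0, …, -v (n - 1), v 0, …` on `ℤ`. -/
def antiperiodicExtension (n : ℕ) (j : ℤ) : α :=
  ((j / n).negOnePow : ℤ) • v (j % n).toNat

variable {n : ℕ}

theorem antiperiodicExtension_natCast {i : ℕ} (hi : i < n) :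
    antiperiodicExtension v n i = v i := by
  have hi' : (i : ℤ) < n := by exact_mod_cast hi
  simp [antiperiodicExtension, Int.ediv_eq_zero_of_lt (Int.natCast_nonneg i) hi',
    Int.emod_eq_of_lt (Int.natCast_nonneg i) hi']

theorem antiperiodic_antiperiodicExtension (hn : 0 < n) :
    Antiperiodic (antiperiodicExtension v n) n := fun j => by
  have hn' : (n : ℤ) ≠ 0 := by exact_mod_cast hn.ne'
  have hdiv : (j + n) / n = j / n + 1 := by simpa using Int.add_mul_ediv_right j 1 hn'
  rw [antiperiodicExtension, antiperiodicExtension, hdiv, Int.add_emod_right, Int.negOnePow_succ,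
    Units.val_neg, neg_zsmul]

theorem antiperiodicExtension_neg_one (hn : 0 < n) :
    antiperiodicExtension v n (-1) = -v (n - 1) := by
  rw [← neg_neg (antiperiodicExtension v n (-1)), ← antiperiodic_antiperiodicExtension v hn,
    show (-1 + n : ℤ) = (n - 1 : ℕ) by omega, antiperiodicExtension_natCast v (by omega)]

theorem antiperiodicExtension_self (hn : 0 < n) :
    antiperiodicExtension v n n = -v 0 := by
  rw [← zero_add (n : ℤ), antiperiodic_antiperiodicExtension v hn,
    ← Nat.cast_zero, antiperiodicExtension_natCast v hn]

end AntiperiodicExtension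

namespace IsFareyPolygon

variable {n : ℕ} {v : ℕ → ℤ × ℤ} {q : ℕ → ℤ}

theorem antiperiodicExtension_natCast_add_one (hv : IsFareyPolygon n v) (hn : 3 ≤ n)
    (hq : ∀ i, q i = ((fdet (v ((i + n - 1) % n)) (v ((i + 1) % n))).natAbs : ℤ))
    {i : ℕ} (hi : i < n) :
    antiperiodicExtension v n (i + 1) =
      q i • antiperiodicExtension v n i - antiperiodicExtension v n (i - 1) := by
  obtain ⟨-, hpos, hadj, hcyc⟩ := hv
  have hn0 : 0 < n := by omega
  rw [antiperiodicExtension_natCast v hi]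
  obtain rfl | hi0 := Nat.eq_zero_or_pos i
  · have hq0 : q 0 = (fdet (-v (n - 1)) (v 1)).natAbs := by
      rw [hq, fdet_neg_left, Int.natAbs_neg, zero_add, Nat.mod_eq_of_lt (by omega : 1 < n),
        Nat.mod_eq_of_lt (by omega : n - 1 < n)]
    rw [Nat.cast_zero, zero_add, zero_sub, antiperiodicExtension_neg_one v hn0, ← Nat.cast_one,
      antiperiodicExtension_natCast v (by omega), hq0]
    refine eq_natAbs_fdet_smul_sub ?_ (hadj 0 (by omega)) ?_
    · rw [fdet_neg_left, ← fdet_swap, hcyc]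
    · rw [fdet_neg_left, ← fdet_swap]
      exact (hpos 1 (n - 1) (by omega) (by omega)).le
  have hprev : ((i : ℤ) - 1) = ((i - 1 : ℕ) : ℤ) := by omega
  have hadj' : fdet (v (i - 1)) (v i) = 1 := by
    simpa [Nat.sub_add_cancel hi0] using hadj (i - 1) (by omega)
  have hqprev : (i + n - 1) % n = i - 1 := by
    rw [show i + n - 1 = i - 1 + n by omega, Nat.add_mod_right, Nat.mod_eq_of_lt (by omega)]
  rw [hprev, antiperiodicExtension_natCast v (by omega)]
  obtain hlast | hmid : i + 1 = n ∨ i + 1 < n := by omega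
  · have hqi : q i = (fdet (v (i - 1)) (-v 0)).natAbs := by
      rw [hq, hqprev, hlast, Nat.mod_self, fdet_neg_right, Int.natAbs_neg]
    have hi' : i = n - 1 := by omega
    rw [show ((i : ℤ) + 1) = n by omega, antiperiodicExtension_self v hn0, hqi]
    refine eq_natAbs_fdet_smul_sub hadj' ?_ ?_
    · rw [fdet_neg_right, ← fdet_swap, hi', hcyc]
    · rw [fdet_neg_right, ← fdet_swap]
      exact (hpos 0 (i - 1) (by omega) (by omega)).le
  · have hqi : q i = (fdet (v (i - 1)) (v (i + 1))).natAbs := by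
      rw [hq, hqprev, Nat.mod_eq_of_lt hmid]
    rw [← Nat.cast_succ, antiperiodicExtension_natCast v hmid, hqi]
    exact eq_natAbs_fdet_smul_sub hadj' (hadj i hmid) (hpos (i - 1) (i + 1) (by omega) hmid).le

theorem isHillSolution_antiperiodicExtension (hv : IsFareyPolygon n v) (hn : 3 ≤ n)
    (hq : ∀ i, q i = ((fdet (v ((i + n - 1) % n)) (v ((i + 1) % n))).natAbs : ℤ)) :
    IsHillSolution (fun j => q ((j % n).toNat)) (antiperiodicExtension v n) := by
  have hn0 : 0 < (n : ℤ) := by omega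
  have hanti := antiperiodic_antiperiodicExtension v (n := n) (by omega)
  have hper : Periodic (fun j : ℤ => antiperiodicExtension v n (j + 1) =
      q ((j % n).toNat) • antiperiodicExtension v n j - antiperiodicExtension v n (j - 1)) n := by
    intro j
    dsimp only
    rw [add_right_comm, show j + n - 1 = j - 1 + n by ring, hanti, hanti, hanti,
      Int.add_emod_right, smul_neg, ← neg_sub', neg_inj]
  intro j
  obtain ⟨i, ⟨hi0, hin⟩, hji⟩ := hper.exists_mem_Ico₀ hn0 j
  lift i to ℕ using hi0
  rw [hji, Int.emod_eq_of_lt (Int.natCast_nonneg i) hin, Int.toNat_natCast]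
  exact antiperiodicExtension_natCast_add_one hv hn hq (by exact_mod_cast hin)

end IsFareyPolygon

/-- Solutions of the Hill equation whose coefficients form the quiddity
`q i = |det(v_{(i-1) mod n}, v_{(i+1) mod n})|` (extended `n`-periodically)
of a Farey `n`-gon are `n`-antiperiodic. -/
theorem stmt7 (n : ℕ) (hn : 3 ≤ n) (v : ℕ → ℤ × ℤ) (hv : IsFareyPolygon n v)
    (q : ℕ → ℤ)
    (hq : ∀ i, q i = ((fdet (v ((i + n - 1) % n)) (v ((i + 1) % n))).natAbs : ℤ))
    (V : ℤ → ℤ)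
    (hV : ∀ j : ℤ, V (j + 1) = q ((j % (n : ℤ)).toNat) * V j - V (j - 1)) :
    ∀ j : ℤ, V (j + (n : ℤ)) = -V j := by
  have hw := hv.isHillSolution_antiperiodicExtension hn hq
  have hanti := antiperiodic_antiperiodicExtension v (n := n) (by omega)
  have hW : fdet (antiperiodicExtension v n 0) (antiperiodicExtension v n 1) = 1 := by
    have h₀ := antiperiodicExtension_natCast v (n := n) (i := 0) (by omega)
    have h₁ := antiperiodicExtension_natCast v (n := n) (i := 1) (by omega)
    push_cast at h₀ h₁
    rw [h₀, h₁]
    exact hv.2.2.1 0 (by omega)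
  exact (hw.map (LinearMap.fst ℤ ℤ ℤ)).antiperiodic_of_wronskian_eq_one
    (hw.map (LinearMap.snd ℤ ℤ ℤ)) hV hW
    (fun j => congrArg Prod.fst (hanti j)) (fun j => congrArg Prod.snd (hanti j))
end

section
/- Every Farey n-gon gives rise to a Coxeter–Conway frieze pattern of positive integers (Coxeter's formula c_{i,j} = d(v_{i−2}, v_j)): let (v_0, …, v_{n−1}) be a Farey n-gon and set c(k,l) = det(v_k, v_l). Then c(k,k) = 0 and c(k,k+1) = 1 for all admissible k, c(k,l) > 0 whenever 0 ≤ k < l ≤ n−1, and the unimodular frieze rule holds: c(k,l)·c(k+1,l+1) − c(k,l+1)·c(k+1,l) = 1 for all 0 ≤ k ≤ n−2 and 0 ≤ l ≤ n−2. -/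
theorem fdet_self (u : ℤ × ℤ) : fdet u u = 0 := by
  unfold fdet; ring

/-- The Plücker relation for `2 × 2` determinants. -/
theorem fdet_mul_fdet_sub_fdet_mul_fdet (a b c d : ℤ × ℤ) :
    fdet a c * fdet b d - fdet a d * fdet b c = fdet a b * fdet c d := by
  unfold fdet; ring

namespace IsFareyPolygon

variable {n : ℕ} {v : ℕ → ℤ × ℤ}

theorem fdet_pos (hv : IsFareyPolygon n v) {i j : ℕ} (hij : i < j) (hj : j < n) :
    0 < fdet (v i) (v j) :=
  hv.2.1 i j hij hj

theorem fdet_succ (hv : IsFareyPolygon n v) {i : ℕ} (hi : i + 1 < n) :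
    fdet (v i) (v (i + 1)) = 1 :=
  hv.2.2.1 i hi

theorem unimodular_rule (hv : IsFareyPolygon n v) {k l : ℕ} (hk : k + 1 < n) (hl : l + 1 < n) :
    fdet (v k) (v l) * fdet (v (k + 1)) (v (l + 1)) -
      fdet (v k) (v (l + 1)) * fdet (v (k + 1)) (v l) = 1 := by
  rw [fdet_mul_fdet_sub_fdet_mul_fdet, hv.fdet_succ hk, hv.fdet_succ hl, mul_one]

end IsFareyPolygon

/-- Every Farey `n`-gon gives rise to a Coxeter–Conway frieze pattern of positive
integers via `c(k,l) = det(v k, v l)`: the entries vanish on the diagonal, equal 1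
on the superdiagonal, are positive above the diagonal, and satisfy the unimodular
frieze rule. -/
theorem stmt19 (n : ℕ) (hn : 3 ≤ n) (v : ℕ → ℤ × ℤ) (hv : IsFareyPolygon n v)
    (c : ℕ → ℕ → ℤ) (hc : ∀ k l, c k l = fdet (v k) (v l)) :
    (∀ k, c k k = 0) ∧
    (∀ k, k + 1 ≤ n - 1 → c k (k + 1) = 1) ∧
    (∀ k l, k < l → l ≤ n - 1 → 0 < c k l) ∧
    (∀ k l, k ≤ n - 2 → l ≤ n - 2 →
      c k l * c (k + 1) (l + 1) - c k (l + 1) * c (k + 1) l = 1) := by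
  obtain rfl : c = fun k l => fdet (v k) (v l) := funext₂ hc
  exact ⟨fun k => fdet_self (v k),
    fun k hk => hv.fdet_succ (by omega),
    fun k l hkl hl => hv.fdet_pos hkl (by omega),
    fun k l hk hl => hv.unimodular_rule (by omega) (by omega)⟩
end
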